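/- Let p(x,y) = −ln(xy − 1) for xy > 1 and +∞ otherwise be the polar cost on ℝ₊ × ℝ₊. The set A = {(x, 3−2x) : 1/2 < x < 1} ∪ {(x, 3/2 − x/2) : 1 < x < 2} is p-cyclically monotone: all its points have finite cost, and for any finite collection (x_i, y_i)_{i=1}^m ⊆ A and any permutation σ of [m], Σ p(x_i, y_i) ≤ Σ p(x_i, y_{σ(i)}). -/

import Mathlib

/-- The polar cost on `ℝ₊ × ℝ₊`: `p(x,y) = −ln(xy − 1)` if `xy > 1`, and `+∞` otherwise. -/
noncomputable def polarCost (x y : ℝ) : EReal :=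
  if 1 < x * y then ((-Real.log (x * y - 1) : ℝ) : EReal) else ⊤

/-- The set `A = {(x, 3−2x) : 1/2 < x < 1} ∪ {(x, 3/2 − x/2) : 1 < x < 2}`. -/
def exampleSet : Set (ℝ × ℝ) :=
  {p | ∃ x : ℝ, 1 / 2 < x ∧ x < 1 ∧ p = (x, 3 - 2 * x)} ∪
    {p | ∃ x : ℝ, 1 < x ∧ x < 2 ∧ p = (x, 3 / 2 - x / 2)}

/-!
The cost `p(x, y) = -log(xy - 1)` satisfies the Monge inequality
`p(x, y') + p(x', y) ≤ p(x, y) + p(x', y')` for `x ≤ x'`, `y ≤ y'`, because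
`(xy' - 1)(x'y - 1) - (xy - 1)(x'y' - 1) = (x' - x)(y' - y)`; when `xy ≤ 1` the right side is `+∞`.
Hence on the graph of a non-increasing function the identity pairing beats every permutation:
repeatedly matching the moved point of smallest abscissa with its own ordinate is a swap that
does not increase the cost and fixes one more point. The set `A` is such a graph, and `xy > 1` on it.
-/

open Equiv Finset

theorem sum_le_sum_comp_perm_of_monge {ι α β M : Type*} [Fintype ι] [DecidableEq ι]
    [LinearOrder α] [Preorder β] [AddCommMonoid M] [PartialOrder M] [IsOrderedAddMonoid M]
    (c : α → β → M) (x : ι → α) (y : ι → β)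
    (hc : ∀ i j k l, x i ≤ x j → y k ≤ y l →
      c (x i) (y l) + c (x j) (y k) ≤ c (x i) (y k) + c (x j) (y l))
    (hxy : ∀ i j, x i ≤ x j → y j ≤ y i) (σ : Perm ι) :
    ∑ i, c (x i) (y i) ≤ ∑ i, c (x i) (y (σ i)) := by
  induction hn : σ.support.card using Nat.strong_induction_on generalizing σ with
  | _ n ih =>
  obtain hσ | hσ := σ.support.eq_empty_or_nonempty
  · rw [Perm.support_eq_empty_iff.mp hσ]
    rfl
  obtain ⟨a, ha, hmin⟩ := σ.support.exists_min_image x hσ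
  set b := σ⁻¹ a
  have hσa : σ a ≠ a := Perm.mem_support.mp ha
  have hb : σ b = a := σ.apply_symm_apply a
  have hba : b ≠ a := fun h => hσa (by rwa [h] at hb)
  set τ := σ * swap a b
  have hτ : τ.support.card < n := by
    rw [← hn, ← Perm.support_inv τ, mul_inv_rev, swap_inv, ← Perm.support_inv σ]
    exact Perm.card_support_swap_mul (by simpa [b] using hba)
  have hswap : ∑ i, c (x i) (y (τ i)) ≤ ∑ i, c (x i) (y (σ i)) := by
    rw [← sum_add_sum_compl {a, b}, ← sum_add_sum_compl {a, b} (fun i => c (x i) (y (σ i))),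
      sum_pair hba.symm, sum_pair hba.symm]
    have hrest : ∀ i ∈ ({a, b} : Finset ι)ᶜ, τ i = σ i := by
      intro i hi
      simp only [mem_compl, mem_insert, mem_singleton, not_or] at hi
      simp [τ, swap_apply_of_ne_of_ne hi.1 hi.2]
    rw [sum_congr rfl fun i hi => by rw [hrest i hi]]
    refine add_le_add_left ?_ _
    simp only [τ, Perm.mul_apply, swap_apply_left, swap_apply_right, hb]
    exact hc a b (σ a) a (hmin b (Perm.mem_support.mpr (by rwa [hb, ne_comm])))
      (hxy a (σ a) (hmin _ (Perm.apply_mem_support.mpr ha)))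
  exact (ih _ hτ τ rfl).trans hswap

theorem polarCost_of_one_lt {x y : ℝ} (h : 1 < x * y) :
    polarCost x y = ((-Real.log (x * y - 1) : ℝ) : EReal) :=
  if_pos h

theorem polarCost_ne_top {x y : ℝ} (h : 1 < x * y) : polarCost x y ≠ ⊤ := by
  rw [polarCost_of_one_lt h]
  exact EReal.coe_ne_top _

theorem polarCost_ne_bot (x y : ℝ) : polarCost x y ≠ ⊥ := by
  unfold polarCost
  split_ifs <;> simp

theorem polarCost_add_polarCost_le {x x' y y' : ℝ} (hx : 0 < x) (hxx' : x ≤ x') (hyy' : y ≤ y') :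
    polarCost x y' + polarCost x' y ≤ polarCost x y + polarCost x' y' := by
  by_cases hxy : 1 < x * y
  swap
  · rw [show polarCost x y = ⊤ from if_neg hxy, EReal.top_add_of_ne_bot (polarCost_ne_bot _ _)]
    exact le_top
  have hy : 0 < y := pos_of_mul_pos_right (one_pos.trans hxy) hx.le
  have hxy' : 1 < x * y' := hxy.trans_le (by gcongr)
  have hx'y : 1 < x' * y := hxy.trans_le (by gcongr)
  have hx'y' : 1 < x' * y' := hx'y.trans_le (by gcongr; linarith)
  rw [polarCost_of_one_lt hxy, polarCost_of_one_lt hxy', polarCost_of_one_lt hx'y,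
    polarCost_of_one_lt hx'y', ← EReal.coe_add, ← EReal.coe_add, EReal.coe_le_coe_iff]
  have key : (x * y - 1) * (x' * y' - 1) ≤ (x * y' - 1) * (x' * y - 1) := by
    nlinarith [mul_nonneg (sub_nonneg.mpr hxx') (sub_nonneg.mpr hyy')]
  have hlog := Real.log_le_log (by nlinarith) key
  rw [Real.log_mul (by linarith) (by linarith), Real.log_mul (by linarith) (by linarith)] at hlog
  linarith

theorem one_lt_mul_of_mem_exampleSet {p : ℝ × ℝ} (hp : p ∈ exampleSet) : 1 < p.1 * p.2 := by
  rcases hp with ⟨x, h₁, h₂, rfl⟩ | ⟨x, h₁, h₂, rfl⟩ <;> dsimp only <;> nlinarith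

theorem fst_pos_of_mem_exampleSet {p : ℝ × ℝ} (hp : p ∈ exampleSet) : 0 < p.1 := by
  rcases hp with ⟨x, h₁, -, rfl⟩ | ⟨x, h₁, -, rfl⟩ <;> dsimp only <;> linarith

theorem exampleSet_snd_le_of_fst_le {p q : ℝ × ℝ} (hp : p ∈ exampleSet) (hq : q ∈ exampleSet)
    (h : p.1 ≤ q.1) : q.2 ≤ p.2 := by
  rcases hp with ⟨x, hx₁, hx₂, rfl⟩ | ⟨x, hx₁, hx₂, rfl⟩ <;>
    rcases hq with ⟨t, ht₁, ht₂, rfl⟩ | ⟨t, ht₁, ht₂, rfl⟩ <;> dsimp only at h ⊢ <;> linarith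

/-- the set `A` is `p`-cyclically monotone for the polar cost: all its points
have finite cost, and for any finite collection of points of `A` and any permutation `σ`,
`Σ p(x_i, y_i) ≤ Σ p(x_i, y_{σ(i)})`. -/
theorem exampleSet_p_cyclically_monotone :
    (∀ p ∈ exampleSet, polarCost p.1 p.2 ≠ ⊤) ∧
      ∀ (m : ℕ) (f : Fin m → ℝ × ℝ), (∀ i, f i ∈ exampleSet) →
        ∀ σ : Equiv.Perm (Fin m),
          ∑ i, polarCost (f i).1 (f i).2 ≤ ∑ i, polarCost (f i).1 (f (σ i)).2 := by
  refine ⟨fun p hp => polarCost_ne_top (one_lt_mul_of_mem_exampleSet hp), ?_⟩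
  intro m f hf σ
  exact sum_le_sum_comp_perm_of_monge polarCost (fun i => (f i).1) (fun i => (f i).2)
    (fun i _ _ _ hij hkl => polarCost_add_polarCost_le (fst_pos_of_mem_exampleSet (hf i)) hij hkl)
    (fun i j h => exampleSet_snd_le_of_fst_le (hf i) (hf j) h) σ
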